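/- For any matrix M in ℂ^{2n×2n} and every Hamiltonian matrix Q in ℂ^{2n×2n}, the residual M − (1/2)(M + J M^H J) is orthogonal to Q with respect to the real part of the Frobenius inner product: Re trace((M − (1/2)(M + J M^H J))^H Q) = 0. -/

import Mathlib

open Matrix

noncomputable def frobNorm {m k : Type*} [Fintype m] [Fintype k] (M : Matrix m k ℂ) : ℝ :=
  Real.sqrt (∑ i, ∑ j, ‖M i j‖ ^ 2)

noncomputable def Jmat (n : ℕ) : Matrix (Fin n ⊕ Fin n) (Fin n ⊕ Fin n) ℂ :=
  Matrix.fromBlocks 0 1 (-1) 0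

def IsHamiltonian {n : ℕ} (Q : Matrix (Fin n ⊕ Fin n) (Fin n ⊕ Fin n) ℂ) : Prop :=
  Q * Jmat n = (Q * Jmat n)ᴴ

/-- The projection of a matrix onto the set of Hamiltonian matrices. -/
noncomputable def hamProj {n : ℕ} (M : Matrix (Fin n ⊕ Fin n) (Fin n ⊕ Fin n) ℂ) :
    Matrix (Fin n ⊕ Fin n) (Fin n ⊕ Fin n) ℂ :=
  (1 / 2 : ℂ) • (M + Jmat n * Mᴴ * Jmat n)

/-!
Write `T A := J Aᴴ J`. For any square `J`, `T` is self-adjoint for the real Frobenius inner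
product `Re tr (Aᴴ B)`, since `tr ((T A)ᴴ B)` is the conjugate of `tr (Aᴴ (T B))`. When
`Jᴴ = -J` and `J² = -1`, the Hamiltonian matrices are fixed by `T`, so the residual
`(M - T M) / 2` pairs with a Hamiltonian `Q` to `Re (tr (Mᴴ Q) - tr (Mᴴ T Q)) / 2 = 0`.
-/

section

variable {ι R : Type*} [Fintype ι] [CommRing R] [StarRing R]

theorem trace_conjTranspose_sandwich_mul (J A B : Matrix ι ι R) :
    trace ((J * Aᴴ * J)ᴴ * B) = star (trace (Aᴴ * (J * Bᴴ * J))) := by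
  rw [← trace_conjTranspose]
  simp only [conjTranspose_mul, conjTranspose_conjTranspose, Matrix.mul_assoc]
  rw [← Matrix.mul_assoc, trace_mul_comm, Matrix.mul_assoc]

theorem sandwich_conjTranspose_eq_self_of_mul_eq_conjTranspose [DecidableEq ι]
    {J Q : Matrix ι ι R} (hJ : Jᴴ = -J) (hJJ : J * J = -1) (hQ : Q * J = (Q * J)ᴴ) :
    J * Qᴴ * J = Q := by
  have hQJJ : Q * J * J = Jᴴ * Qᴴ * J := by rw [← conjTranspose_mul, ← hQ]
  rw [Matrix.mul_assoc Q, hJJ, hJ] at hQJJ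
  simpa using hQJJ.symm

theorem re_trace_conjTranspose_residual_mul_eq_zero [DecidableEq ι] {J Q : Matrix ι ι ℂ}
    (hJ : Jᴴ = -J) (hJJ : J * J = -1) (hQ : Q * J = (Q * J)ᴴ) (M : Matrix ι ι ℂ) :
    (trace ((M - (1 / 2 : ℂ) • (M + J * Mᴴ * J))ᴴ * Q)).re = 0 := by
  have hT : trace ((J * Mᴴ * J)ᴴ * Q) = star (trace (Mᴴ * Q)) := by
    rw [trace_conjTranspose_sandwich_mul,
      sandwich_conjTranspose_eq_self_of_mul_eq_conjTranspose hJ hJJ hQ]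
  simp only [conjTranspose_sub, conjTranspose_smul, conjTranspose_add, Matrix.sub_mul,
    Matrix.smul_mul, Matrix.add_mul, trace_sub, trace_smul, trace_add, hT, smul_eq_mul]
  simp [Complex.conj_re, ← two_mul]

end

theorem Jmat_conjTranspose (n : ℕ) : (Jmat n)ᴴ = -Jmat n := by
  simp [Jmat, fromBlocks_conjTranspose, fromBlocks_neg]

theorem Jmat_mul_self (n : ℕ) : Jmat n * Jmat n = -1 := by
  simp [Jmat, fromBlocks_multiply, ← fromBlocks_one, fromBlocks_neg]

/-- The residual `M − (1/2)(M + J Mᴴ J)` is orthogonal to every Hamiltonian matrix `Q`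
with respect to the real part of the Frobenius inner product. -/
theorem hamProj_residual_orthogonal (n : ℕ)
    (M : Matrix (Fin n ⊕ Fin n) (Fin n ⊕ Fin n) ℂ)
    (Q : Matrix (Fin n ⊕ Fin n) (Fin n ⊕ Fin n) ℂ) (hQ : IsHamiltonian Q) :
    (Matrix.trace ((M - (1 / 2 : ℂ) • (M + Jmat n * Mᴴ * Jmat n))ᴴ * Q)).re = 0 :=
  re_trace_conjTranspose_residual_mul_eq_zero (Jmat_conjTranspose n) (Jmat_mul_self n) hQ M
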